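/- Restriction to incomplete one-period wealth families: Fix α ∈ (0,1) and let W_feas ⊆ W̄ be any nonempty closed subset. Then sup_{W ∈ W_feas} Q_{n,α}(W) = max over admissible chambers Γ of sup_{W ∈ W_feas ∩ cl(F_Γ)} W^{k_{α,Γ}} (with the convention that the inner supremum over an empty set is ignored in the max). -/

import Mathlib

open Finset Filter Topology
open scoped Classical

noncomputable section

/-- The closed Arrow–Debreu wealth simplex `{W ∈ [0,∞)^m : Σ q_i W_i = 1}`. -/
def closedSimplex {m : ℕ} (q : Fin m → ℝ) : Set (Fin m → ℝ) :=
  {W | (∀ i, 0 ≤ W i) ∧ ∑ i, q i * W i = 1}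

/-- The open Arrow–Debreu wealth simplex `{W ∈ (0,∞)^m : Σ q_i W_i = 1}`. -/
def openSimplex {m : ℕ} (q : Fin m → ℝ) : Set (Fin m → ℝ) :=
  {W | (∀ i, 0 < W i) ∧ ∑ i, q i * W i = 1}

/-- The finite set `C_n` of count vectors `k : Fin m → ℕ` with `Σ k_i = n`. -/
def countFinset (m n : ℕ) : Finset (Fin m → ℕ) :=
  (Fintype.piFinset fun _ : Fin m => Finset.range (n + 1)).filter fun k => ∑ i, k i = n

/-- The monomial `W^k := Π_i W_i^{k_i}` (with the convention `0^0 = 1`). -/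
def mono {m : ℕ} (W : Fin m → ℝ) (k : Fin m → ℕ) : ℝ := ∏ i, W i ^ k i

/-- The multinomial probability `π_k = (n!/(k_1!⋯k_m!))·Π p_i^{k_i}`. -/
def countProb {m : ℕ} (p : Fin m → ℝ) (k : Fin m → ℕ) : ℝ :=
  (Nat.multinomial Finset.univ k : ℝ) * ∏ i, p i ^ k i

/-- The upper α-quantile of terminal wealth
`Q_{n,α}(W) := sup{t ∈ [0,∞) : Σ_{k ∈ C_n : W^k ≥ t} π_k ≥ α}`. -/
def upperQuantile {m : ℕ} (p : Fin m → ℝ) (n : ℕ) (α : ℝ) (W : Fin m → ℝ) : ℝ :=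
  sSup {t : ℝ | 0 ≤ t ∧
    α ≤ ∑ k ∈ countFinset m n, if t ≤ mono W k then countProb p k else 0}

/-- The union of the count hyperplanes `H_{k,ℓ}`. -/
def hyperUnion (m n : ℕ) : Set (Fin m → ℝ) :=
  {u | ∃ k ∈ countFinset m n, ∃ l ∈ countFinset m n,
    k ≠ l ∧ ∑ i, ((k i : ℝ) - (l i : ℝ)) * u i = 0}

/-- A chamber is a connected component of the complement of the count arrangement. -/
def IsChamber (m n : ℕ) (Γ : Set (Fin m → ℝ)) : Prop :=
  ∃ u ∈ (hyperUnion m n)ᶜ, Γ = connectedComponentIn (hyperUnion m n)ᶜ u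

/-- `F_Γ := {W ∈ W⁺⁺ : log W ∈ Γ}`. -/
def chamberFace {m : ℕ} (q : Fin m → ℝ) (Γ : Set (Fin m → ℝ)) : Set (Fin m → ℝ) :=
  {W | W ∈ openSimplex q ∧ (fun i => Real.log (W i)) ∈ Γ}

/-- `k` is the quantile count vector `k_{α,Γ}` of the chamber `Γ`: the tail mass at `W^k`
is at least `α`, while the strict tail mass is below `α`, for every `W ∈ F_Γ`. -/
def IsQuantileVec {m : ℕ} (p q : Fin m → ℝ) (n : ℕ) (α : ℝ) (Γ : Set (Fin m → ℝ))
    (k : Fin m → ℕ) : Prop :=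
  k ∈ countFinset m n ∧
  ∀ W ∈ chamberFace q Γ,
    α ≤ (∑ l ∈ countFinset m n, if mono W k ≤ mono W l then countProb p l else 0) ∧
    (∑ l ∈ countFinset m n, if mono W k < mono W l then countProb p l else 0) < α


/-!
For `W` with positive coordinates, `W^k < W^l` iff `log W` lies on the negative side of
`H_{k,l}`, so the ordering of the monomials is the same at all points of a chamber face
`F_Γ`, and by continuity it persists weakly on `cl(F_Γ)`; hence `Q_{n,α}(W) = W^{k_{α,Γ}}`
for every `W ∈ cl(F_Γ)`.

Every `W ∈ W̄` lies in the closure of an admissible face. The arrangement is a finite union of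
hyperplanes, hence Lebesgue-null, so its complement is dense and the normalised exponentials
`exp u / Σ q_j exp u_j` of its points accumulate at every point of `W̄`. These points fall into
finitely many sign classes with respect to the forms `u ↦ Σ (k_i - l_i) u_i`; a sign class is
convex, hence contained in a single chamber, and one of the classes accumulates at `W`.

So `W_feas` is covered by the sets `W_feas ∩ cl(F_Γ)`, on each of which `Q_{n,α}` is the
monomial `W^{k_{α,Γ}}`, and the two suprema agree.
-/

theorem csSup_image_eq_csSup_of_cover {α ι β : Type*} [ConditionallyCompleteLattice β]
    {f : α → β} {s : Set α} {P : ι → Prop} {S : ι → Set α} {g : ι → α → β}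
    (hbdd : BddAbove (f '' s)) (hs : s.Nonempty) (hSs : ∀ i, P i → S i ⊆ s)
    (hgf : ∀ i, P i → Set.EqOn (g i) f (S i)) (hcover : ∀ x ∈ s, ∃ i, P i ∧ x ∈ S i) :
    sSup (f '' s) = sSup {v | ∃ i, P i ∧ (S i).Nonempty ∧ v = sSup (g i '' S i)} := by
  have himg : ∀ i, P i → g i '' S i = f '' S i := fun i hi => (hgf i hi).image_eq
  have hpiece : ∀ i, P i → (S i).Nonempty → sSup (f '' S i) ≤ sSup (f '' s) := fun i hi hne =>
    csSup_le_csSup hbdd (hne.image f) (Set.image_mono (hSs i hi))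
  apply le_antisymm
  · refine csSup_le (hs.image f) ?_
    rintro _ ⟨x, hx, rfl⟩
    obtain ⟨i, hi, hxi⟩ := hcover x hx
    have hRHS : BddAbove {v | ∃ i, P i ∧ (S i).Nonempty ∧ v = sSup (g i '' S i)} := by
      refine ⟨sSup (f '' s), ?_⟩
      rintro _ ⟨j, hj, hne, rfl⟩
      rw [himg j hj]
      exact hpiece j hj hne
    calc f x ≤ sSup (f '' S i) :=
          le_csSup (hbdd.mono (Set.image_mono (hSs i hi))) (Set.mem_image_of_mem f hxi)
      _ ≤ _ := le_csSup hRHS ⟨i, hi, ⟨x, hxi⟩, by rw [himg i hi]⟩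
  · obtain ⟨x, hx⟩ := hs
    obtain ⟨i, hi, hxi⟩ := hcover x hx
    refine csSup_le ⟨_, i, hi, ⟨x, hxi⟩, rfl⟩ ?_
    rintro _ ⟨j, hj, hne, rfl⟩
    rw [himg j hj]
    exact hpiece j hj hne

theorem Finset.exists_quantile_index {ι : Type*} (s : Finset ι) (v w : ι → ℝ) {α : ℝ}
    (hα : 0 < α) (htot : α ≤ ∑ i ∈ s, w i) :
    ∃ k ∈ s, α ≤ (∑ l ∈ s, if v k ≤ v l then w l else 0) ∧
      (∑ l ∈ s, if v k < v l then w l else 0) < α := by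
  set T := s.filter fun k => α ≤ ∑ l ∈ s, if v k ≤ v l then w l else 0
  have hs : s.Nonempty := nonempty_of_sum_ne_zero (f := w) (by linarith)
  obtain ⟨kmin, hkmin, hmin⟩ := s.exists_min_image v hs
  have hT : T.Nonempty := by
    refine ⟨kmin, mem_filter.2 ⟨hkmin, ?_⟩⟩
    rwa [sum_congr rfl fun l hl => if_pos (hmin l hl)]
  obtain ⟨k, hkT, hmax⟩ := T.exists_max_image v hT
  obtain ⟨hk, hge⟩ := mem_filter.1 hkT
  refine ⟨k, hk, hge, not_le.1 fun hgt => ?_⟩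
  set U := s.filter fun l => v k < v l
  rcases U.eq_empty_or_nonempty with hU | hU
  · have hzero : (∑ l ∈ s, if v k < v l then w l else 0) = 0 := by
      refine sum_eq_zero fun l hl => if_neg fun h => ?_
      exact eq_empty_iff_forall_notMem.1 hU l (mem_filter.2 ⟨hl, h⟩)
    linarith
  -- the next value above `v k` has the same tail as the strict tail of `k`, so lies in `T`
  obtain ⟨l₀, hl₀U, hl₀min⟩ := U.exists_min_image v hU
  obtain ⟨hl₀, hkl₀⟩ := mem_filter.1 hl₀U
  have htail : (∑ l ∈ s, if v l₀ ≤ v l then w l else 0) =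
      ∑ l ∈ s, if v k < v l then w l else 0 := by
    refine sum_congr rfl fun l hl => if_congr ⟨hkl₀.trans_le, fun h => ?_⟩ rfl rfl
    exact hl₀min l (mem_filter.2 ⟨hl, h⟩)
  exact (hmax l₀ (mem_filter.2 ⟨hl₀, htail ▸ hgt⟩)).not_gt hkl₀

theorem Finset.sum_ite_le_sum_ite {ι : Type*} {s : Finset ι} {P Q : ι → Prop}
    [DecidablePred P] [DecidablePred Q] {w : ι → ℝ} (hw : ∀ i ∈ s, 0 ≤ w i)
    (hPQ : ∀ i ∈ s, P i → Q i) :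
    (∑ i ∈ s, if P i then w i else 0) ≤ ∑ i ∈ s, if Q i then w i else 0 := by
  refine sum_le_sum fun i hi => ?_
  split_ifs with hP hQ hQ
  exacts [le_rfl, absurd (hPQ i hi hP) hQ, hw i hi, le_rfl]

lemma mem_countFinset {m n : ℕ} {k : Fin m → ℕ} : k ∈ countFinset m n ↔ ∑ i, k i = n := by
  simp only [countFinset, mem_filter, Fintype.mem_piFinset, mem_range, and_iff_right_iff_imp]
  rintro rfl i
  exact Nat.lt_succ_of_le (single_le_sum (fun j _ => Nat.zero_le (k j)) (mem_univ i))

lemma sum_countProb {m : ℕ} {p : Fin m → ℝ} (hp : ∑ i, p i = 1) (n : ℕ) :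
    ∑ k ∈ countFinset m n, countProb p k = 1 := by
  have hC : countFinset m n = piAntidiag univ n := by
    ext k
    simp [mem_countFinset, mem_piAntidiag]
  rw [hC, ← one_pow n, ← hp, sum_pow_eq_sum_piAntidiag]
  rfl

lemma countProb_nonneg {m : ℕ} {p : Fin m → ℝ} (hp : ∀ i, 0 ≤ p i) (k : Fin m → ℕ) :
    0 ≤ countProb p k :=
  mul_nonneg (Nat.cast_nonneg _) (prod_nonneg fun i _ => pow_nonneg (hp i) _)

lemma mono_nonneg {m : ℕ} {W : Fin m → ℝ} (hW : ∀ i, 0 ≤ W i) (k : Fin m → ℕ) :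
    0 ≤ mono W k :=
  prod_nonneg fun i _ => pow_nonneg (hW i) _

lemma mono_le_mono {m : ℕ} {W V : Fin m → ℝ} (hW : ∀ i, 0 ≤ W i) (hWV : W ≤ V)
    (k : Fin m → ℕ) : mono W k ≤ mono V k :=
  prod_le_prod (fun i _ => pow_nonneg (hW i) _) fun i _ => pow_le_pow_left₀ (hW i) (hWV i) _

lemma continuous_mono {m : ℕ} (k : Fin m → ℕ) : Continuous fun W : Fin m → ℝ => mono W k := by
  unfold mono
  fun_prop

lemma log_mono {m : ℕ} {W : Fin m → ℝ} (hW : ∀ i, 0 < W i) (k : Fin m → ℕ) :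
    Real.log (mono W k) = ∑ i, (k i : ℝ) * Real.log (W i) := by
  rw [mono, Real.log_prod fun i _ => (pow_pos (hW i) _).ne']
  simp only [Real.log_pow]

lemma le_inv_of_mem_closedSimplex {m : ℕ} {q W : Fin m → ℝ} (hq : ∀ i, 0 < q i)
    (hW : W ∈ closedSimplex q) (i : Fin m) : W i ≤ (q i)⁻¹ := by
  rw [← one_div, le_div_iff₀' (hq i), ← hW.2]
  exact single_le_sum (fun j _ => mul_nonneg (hq j).le (hW.1 j)) (mem_univ i)

def countDiff {m : ℕ} (k l : Fin m → ℕ) : Fin m → ℝ := fun i => (k i : ℝ) - l i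

lemma countDiff_ne_zero {m : ℕ} {k l : Fin m → ℕ} (hkl : k ≠ l) : countDiff k l ≠ 0 := by
  intro h
  refine hkl (funext fun i => Nat.cast_injective (R := ℝ) ?_)
  exact sub_eq_zero.1 (congrFun h i)

lemma countDiff_dotProduct_add_const {m n : ℕ} {k l : Fin m → ℕ} (hk : k ∈ countFinset m n)
    (hl : l ∈ countFinset m n) (u : Fin m → ℝ) (c : ℝ) :
    countDiff k l ⬝ᵥ (fun i => u i + c) = countDiff k l ⬝ᵥ u := by
  have hsum : ∑ i, countDiff k l i = 0 := by
    simp only [countDiff, sum_sub_distrib, ← Nat.cast_sum, mem_countFinset.1 hk,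
      mem_countFinset.1 hl, sub_self]
  simp only [dotProduct, mul_add, sum_add_distrib, ← sum_mul, hsum, zero_mul, add_zero]

lemma mem_hyperUnion {m n : ℕ} {u : Fin m → ℝ} :
    u ∈ hyperUnion m n ↔
      ∃ k ∈ countFinset m n, ∃ l ∈ countFinset m n, k ≠ l ∧ countDiff k l ⬝ᵥ u = 0 :=
  Iff.rfl

lemma mono_lt_mono_iff {m : ℕ} {W : Fin m → ℝ} (hW : ∀ i, 0 < W i) (k l : Fin m → ℕ) :
    mono W k < mono W l ↔ countDiff k l ⬝ᵥ (fun i => Real.log (W i)) < 0 := by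
  have hpos : ∀ k, 0 < mono W k := fun k => prod_pos fun i _ => pow_pos (hW i) _
  rw [← Real.log_lt_log_iff (hpos k) (hpos l), log_mono hW, log_mono hW, ← sub_neg]
  simp only [dotProduct, countDiff, sub_mul, sum_sub_distrib]

def tailMass {m : ℕ} (p : Fin m → ℝ) (n : ℕ) (W : Fin m → ℝ) (t : ℝ) : ℝ :=
  ∑ k ∈ countFinset m n, if t ≤ mono W k then countProb p k else 0

def strictTailMass {m : ℕ} (p : Fin m → ℝ) (n : ℕ) (W : Fin m → ℝ) (t : ℝ) : ℝ :=
  ∑ k ∈ countFinset m n, if t < mono W k then countProb p k else 0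

section Quantile

variable {m n : ℕ} {p : Fin m → ℝ}

lemma upperQuantile_eq_of_tailMass (hp : ∀ i, 0 ≤ p i) {α : ℝ} {W : Fin m → ℝ} {x : ℝ}
    (hx : 0 ≤ x) (hge : α ≤ tailMass p n W x) (hlt : strictTailMass p n W x < α) :
    upperQuantile p n α W = x := by
  refine IsGreatest.csSup_eq ⟨⟨hx, hge⟩, fun t ⟨_, ht⟩ => not_lt.1 fun hxt => ?_⟩
  have : tailMass p n W t ≤ strictTailMass p n W x :=
    sum_ite_le_sum_ite (fun k _ => countProb_nonneg hp k) fun k _ => hxt.trans_le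
  exact (ht.trans this).not_gt hlt

lemma upperQuantile_le {α : ℝ} (hα : 0 < α) {W : Fin m → ℝ} {B : ℝ} (hB₀ : 0 ≤ B)
    (hB : ∀ k ∈ countFinset m n, mono W k ≤ B) : upperQuantile p n α W ≤ B := by
  refine Real.sSup_le (fun t ⟨_, ht⟩ => not_lt.1 fun hBt => ?_) hB₀
  have hzero : tailMass p n W t = 0 :=
    sum_eq_zero fun k hk => if_neg (not_le.2 ((hB k hk).trans_lt hBt))
  exact (ht.trans_eq hzero).not_gt hα

lemma upperQuantile_le_of_mem_closedSimplex {q : Fin m → ℝ} (hq : ∀ i, 0 < q i) {α : ℝ}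
    (hα : 0 < α) {W : Fin m → ℝ} (hW : W ∈ closedSimplex q) :
    upperQuantile p n α W ≤ ∑ k ∈ countFinset m n, mono (fun i => (q i)⁻¹) k := by
  have hq' : ∀ i, 0 ≤ (q i)⁻¹ := fun i => (inv_pos.2 (hq i)).le
  refine upperQuantile_le hα (sum_nonneg fun k _ => mono_nonneg hq' k) fun k hk => ?_
  exact (mono_le_mono hW.1 (le_inv_of_mem_closedSimplex hq hW) k).trans
    (single_le_sum (fun l _ => mono_nonneg hq' l) hk)

end Quantile

section Chamber

variable {m n : ℕ} {q : Fin m → ℝ} {Γ : Set (Fin m → ℝ)} {k l : Fin m → ℕ}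

lemma IsChamber.dotProduct_neg_of_neg (hΓ : IsChamber m n Γ) (hk : k ∈ countFinset m n)
    (hl : l ∈ countFinset m n) {u v : Fin m → ℝ} (hu : u ∈ Γ) (hv : v ∈ Γ)
    (huneg : countDiff k l ⬝ᵥ u < 0) : countDiff k l ⬝ᵥ v < 0 := by
  obtain ⟨u₀, -, rfl⟩ := hΓ
  have hkl : k ≠ l := by
    rintro rfl
    simp [countDiff, dotProduct] at huneg
  by_contra! hvnonneg
  obtain ⟨w, hw, hw0⟩ := isPreconnected_connectedComponentIn.intermediate_value hu hv
    (continuous_const.dotProduct continuous_id).continuousOn ⟨huneg.le, hvnonneg⟩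
  exact connectedComponentIn_subset _ _ hw ⟨k, hk, l, hl, hkl, hw0⟩

lemma mono_lt_mono_of_mem_chamberFace (hΓ : IsChamber m n Γ) (hk : k ∈ countFinset m n)
    (hl : l ∈ countFinset m n) {W W' : Fin m → ℝ} (hW : W ∈ chamberFace q Γ)
    (hW' : W' ∈ chamberFace q Γ) (hlt : mono W k < mono W l) : mono W' k < mono W' l :=
  (mono_lt_mono_iff hW'.1.1 k l).2 <|
    hΓ.dotProduct_neg_of_neg hk hl hW.2 hW'.2 ((mono_lt_mono_iff hW.1.1 k l).1 hlt)

lemma mono_lt_mono_of_mem_closure_chamberFace (hΓ : IsChamber m n Γ)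
    (hk : k ∈ countFinset m n) (hl : l ∈ countFinset m n) {W W' : Fin m → ℝ}
    (hW : W ∈ closure (chamberFace q Γ)) (hW' : W' ∈ chamberFace q Γ)
    (hlt : mono W k < mono W l) : mono W' k < mono W' l := by
  obtain ⟨W₀, hW₀lt, hW₀⟩ := mem_closure_iff.1 hW {V | mono V k < mono V l}
    (isOpen_lt (continuous_mono k) (continuous_mono l)) hlt
  exact mono_lt_mono_of_mem_chamberFace hΓ hk hl hW₀ hW' hW₀lt

variable {p : Fin m → ℝ}

lemma tailMass_le_tailMass_of_mem_closure (hp : ∀ i, 0 ≤ p i) (hΓ : IsChamber m n Γ)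
    (hk : k ∈ countFinset m n) {W W₀ : Fin m → ℝ} (hW : W ∈ closure (chamberFace q Γ))
    (hW₀ : W₀ ∈ chamberFace q Γ) :
    tailMass p n W₀ (mono W₀ k) ≤ tailMass p n W (mono W k) :=
  sum_ite_le_sum_ite (fun j _ => countProb_nonneg hp j) fun _ hj hle =>
    not_lt.1 fun hlt => (mono_lt_mono_of_mem_closure_chamberFace hΓ hj hk hW hW₀ hlt).not_ge hle

lemma strictTailMass_le_strictTailMass_of_mem_closure (hp : ∀ i, 0 ≤ p i)
    (hΓ : IsChamber m n Γ) (hk : k ∈ countFinset m n) {W W₀ : Fin m → ℝ}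
    (hW : W ∈ closure (chamberFace q Γ)) (hW₀ : W₀ ∈ chamberFace q Γ) :
    strictTailMass p n W (mono W k) ≤ strictTailMass p n W₀ (mono W₀ k) :=
  sum_ite_le_sum_ite (fun j _ => countProb_nonneg hp j) fun _ hj =>
    mono_lt_mono_of_mem_closure_chamberFace hΓ hk hj hW hW₀

lemma exists_isQuantileVec (hp : ∀ i, 0 ≤ p i) (hpsum : ∑ i, p i = 1) {α : ℝ}
    (hα : 0 < α ∧ α < 1) (hΓ : IsChamber m n Γ) (hF : (chamberFace q Γ).Nonempty) :
    ∃ k, IsQuantileVec p q n α Γ k := by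
  obtain ⟨W₀, hW₀⟩ := hF
  obtain ⟨k, hk, hge, hlt⟩ := (countFinset m n).exists_quantile_index (mono W₀) (countProb p)
    hα.1 (by rw [sum_countProb hpsum]; exact hα.2.le)
  refine ⟨k, hk, fun W hW => ⟨?_, ?_⟩⟩
  · exact hge.trans (tailMass_le_tailMass_of_mem_closure hp hΓ hk (subset_closure hW) hW₀)
  · exact (strictTailMass_le_strictTailMass_of_mem_closure hp hΓ hk (subset_closure hW)
      hW₀).trans_lt hlt

lemma upperQuantile_eq_mono_of_mem_closure (hp : ∀ i, 0 ≤ p i) {α : ℝ}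
    (hΓ : IsChamber m n Γ) (hqv : IsQuantileVec p q n α Γ k) {W : Fin m → ℝ}
    (hW : ∀ i, 0 ≤ W i) (hWc : W ∈ closure (chamberFace q Γ)) :
    upperQuantile p n α W = mono W k := by
  obtain ⟨W₀, hW₀⟩ := closure_nonempty_iff.1 ⟨W, hWc⟩
  obtain ⟨hge, hlt⟩ := hqv.2 W₀ hW₀
  exact upperQuantile_eq_of_tailMass hp (mono_nonneg hW k)
    (hge.trans (tailMass_le_tailMass_of_mem_closure hp hΓ hqv.1 hWc hW₀))
    ((strictTailMass_le_strictTailMass_of_mem_closure hp hΓ hqv.1 hWc hW₀).trans_lt hlt)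

end Chamber

section Arrangement

variable {m : ℕ} (n : ℕ)

lemma volume_hyperUnion : MeasureTheory.volume (hyperUnion m n) = 0 := by
  set pairs := {kl ∈ countFinset m n ×ˢ countFinset m n | kl.1 ≠ kl.2}
  have hH : hyperUnion m n = ⋃ kl ∈ pairs,
      (LinearMap.ker (dotProductBilin ℝ ℝ (countDiff kl.1 kl.2)) : Set (Fin m → ℝ)) := by
    ext u
    simp [pairs, mem_hyperUnion, and_assoc]
  rw [hH, ← nonpos_iff_eq_zero]
  refine (MeasureTheory.measure_biUnion_finset_le _ _).trans_eq (sum_eq_zero ?_)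
  rintro ⟨k, l⟩ hkl
  refine MeasureTheory.Measure.addHaar_submodule _ _ fun htop => ?_
  refine countDiff_ne_zero (mem_filter.1 hkl).2 (dotProduct_self_eq_zero.1 ?_)
  simpa using LinearMap.congr_fun (LinearMap.ker_eq_top.1 htop) (countDiff k l)

lemma dense_compl_hyperUnion : Dense (hyperUnion m n)ᶜ :=
  interior_eq_empty_iff_dense_compl.1
    (MeasureTheory.Measure.interior_eq_empty_of_null (volume_hyperUnion n))

def signPattern (u : Fin m → ℝ) : countFinset m n × countFinset m n → SignType :=
  fun kl => SignType.sign (countDiff kl.1.1 kl.2.1 ⬝ᵥ u)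

lemma convex_setOf_sign_eq (s : SignType) : Convex ℝ {x : ℝ | SignType.sign x = s} := by
  rcases s with _ | _ | _
  · simpa only [SignType.zero_eq_zero, sign_eq_zero_iff, Set.ofPred_eq_eq_singleton] using
      convex_singleton (𝕜 := ℝ) (0 : ℝ)
  · simp only [SignType.neg_eq_neg_one, sign_eq_neg_one_iff]
    exact convex_Iio 0
  · simp only [SignType.pos_eq_one, sign_eq_one_iff]
    exact convex_Ioi 0

lemma convex_setOf_signPattern_eq (σ : countFinset m n × countFinset m n → SignType) :
    Convex ℝ {u | signPattern n u = σ} := by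
  have hσ : {u | signPattern n u = σ} =
      ⋂ kl, dotProductBilin ℝ ℝ (countDiff kl.1.1 kl.2.1) ⁻¹' {x | SignType.sign x = σ kl} := by
    ext u
    simp [signPattern, funext_iff]
  rw [hσ]
  exact convex_iInter fun kl =>
    (convex_setOf_sign_eq (σ kl)).is_linear_preimage (LinearMap.isLinear _)

lemma signPattern_add_const (u : Fin m → ℝ) (c : ℝ) :
    signPattern n (fun i => u i + c) = signPattern n u :=
  funext fun kl => by
    simp only [signPattern, countDiff_dotProduct_add_const kl.1.2 kl.2.2]

lemma setOf_signPattern_eq_subset_connectedComponentIn {u : Fin m → ℝ}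
    (hu : u ∉ hyperUnion m n) :
    {v | signPattern n v = signPattern n u} ⊆ connectedComponentIn (hyperUnion m n)ᶜ u := by
  refine (convex_setOf_signPattern_eq n _).isPreconnected.subset_connectedComponentIn rfl ?_
  rintro v hv ⟨k, hk, l, hl, hkl, hv0⟩
  have hsign : SignType.sign (countDiff k l ⬝ᵥ u) = SignType.sign (countDiff k l ⬝ᵥ v) :=
    (congrFun hv (⟨k, hk⟩, ⟨l, hl⟩)).symm
  rw [show countDiff k l ⬝ᵥ v = 0 from hv0, sign_zero, sign_eq_zero_iff] at hsign
  exact hu ⟨k, hk, l, hl, hkl, hsign⟩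

end Arrangement

section Normalization

variable {m : ℕ} {q : Fin m → ℝ}

def expNormalize (q u : Fin m → ℝ) : Fin m → ℝ :=
  fun i => Real.exp (u i) / ∑ j, q j * Real.exp (u j)

lemma closedSimplex_subset_closure_range_expNormalize :
    closedSimplex q ⊆ closure (Set.range (expNormalize q)) := by
  intro W hW
  have hcurve : ∀ δ : ℝ, 0 < δ → expNormalize q (fun i => Real.log (W i + δ)) =
      fun i => (W i + δ) / ∑ j, q j * (W j + δ) := by
    intro δ hδ
    have hpos : ∀ j, 0 < W j + δ := fun j => add_pos_of_nonneg_of_pos (hW.1 j) hδ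
    ext i
    simp only [expNormalize, Real.exp_log, hpos]
  have hden : Tendsto (fun δ : ℝ => ∑ j, q j * (W j + δ)) (𝓝 0) (𝓝 1) :=
    (by fun_prop : Continuous fun δ : ℝ => ∑ j, q j * (W j + δ)).tendsto' 0 1
      (by simpa only [add_zero] using hW.2)
  have hlim : Tendsto (fun δ : ℝ => fun i => (W i + δ) / ∑ j, q j * (W j + δ)) (𝓝 0) (𝓝 W) :=
    tendsto_pi_nhds.2 fun i => by
      simpa [Pi.div_def] using (tendsto_const_nhds.add tendsto_id).div hden one_ne_zero
  refine mem_closure_of_tendsto (hlim.mono_left (nhdsWithin_le_nhds (s := Set.Ioi 0))) ?_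
  filter_upwards [self_mem_nhdsWithin] with δ hδ
  exact ⟨_, hcurve δ hδ⟩

variable [Nonempty (Fin m)]

lemma expNormalize_denom_pos (hq : ∀ i, 0 < q i) (u : Fin m → ℝ) :
    0 < ∑ j, q j * Real.exp (u j) :=
  sum_pos (fun j _ => mul_pos (hq j) (Real.exp_pos _)) univ_nonempty

lemma expNormalize_mem_openSimplex (hq : ∀ i, 0 < q i) (u : Fin m → ℝ) :
    expNormalize q u ∈ openSimplex q := by
  have hN := expNormalize_denom_pos hq u
  refine ⟨fun i => div_pos (Real.exp_pos _) hN, ?_⟩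
  simp only [expNormalize, mul_div_assoc', ← sum_div, div_self hN.ne']

lemma log_expNormalize (hq : ∀ i, 0 < q i) (u : Fin m → ℝ) :
    (fun i => Real.log (expNormalize q u i)) =
      fun i => u i + -Real.log (∑ j, q j * Real.exp (u j)) := by
  ext i
  rw [expNormalize, Real.log_div (Real.exp_ne_zero _) (expNormalize_denom_pos hq u).ne',
    Real.log_exp, sub_eq_add_neg]

lemma continuous_expNormalize (hq : ∀ i, 0 < q i) : Continuous (expNormalize q) :=
  continuous_pi fun i => (Real.continuous_exp.comp (continuous_apply i)).div (by fun_prop)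
    fun u => (expNormalize_denom_pos hq u).ne'

end Normalization

lemma exists_isChamber_mem_closure_chamberFace {m : ℕ} (n : ℕ) {q : Fin m → ℝ}
    (hq : ∀ i, 0 < q i) {W : Fin m → ℝ} (hW : W ∈ closedSimplex q) :
    ∃ Γ, IsChamber m n Γ ∧ (chamberFace q Γ).Nonempty ∧ W ∈ closure (chamberFace q Γ) := by
  have : Nonempty (Fin m) :=
    let ⟨i, _⟩ := nonempty_of_sum_ne_zero (hW.2.trans_ne one_ne_zero); ⟨i⟩
  set E : (countFinset m n × countFinset m n → SignType) → Set (Fin m → ℝ) :=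
    fun σ => expNormalize q '' ((hyperUnion m n)ᶜ ∩ {u | signPattern n u = σ})
  -- finitely many sign patterns, so one of the pieces `E σ` already has `W` in its closure
  have hWE : W ∈ closure (⋃ σ, E σ) := by
    have hrange : Set.range (expNormalize q) ⊆ closure (⋃ σ, E σ) := by
      rw [← Set.image_univ, ← (dense_compl_hyperUnion n).closure_eq]
      refine (image_closure_subset_closure_image (continuous_expNormalize hq)).trans
        (closure_mono ?_)
      rintro _ ⟨u, hu, rfl⟩
      exact Set.mem_iUnion.2 ⟨signPattern n u, u, ⟨hu, rfl⟩, rfl⟩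
    exact closure_minimal hrange isClosed_closure
      (closedSimplex_subset_closure_range_expNormalize hW)
  rw [closure_iUnion_of_finite] at hWE
  obtain ⟨σ, hσ⟩ := Set.mem_iUnion.1 hWE
  obtain ⟨_, u, ⟨hu, rfl⟩, rfl⟩ := closure_nonempty_iff.1 ⟨W, hσ⟩
  have hEF : E (signPattern n u) ⊆ chamberFace q (connectedComponentIn (hyperUnion m n)ᶜ u) := by
    rintro _ ⟨v, ⟨-, hv⟩, rfl⟩
    refine ⟨expNormalize_mem_openSimplex hq v,
      setOf_signPattern_eq_subset_connectedComponentIn n hu ?_⟩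
    rw [Set.mem_ofPred_eq, log_expNormalize hq, signPattern_add_const]
    exact hv
  exact ⟨_, ⟨u, hu, rfl⟩, ⟨_, hEF ⟨u, ⟨hu, rfl⟩, rfl⟩⟩, closure_mono hEF hσ⟩

theorem restricted_family_general (m n : ℕ)
    (p q : Fin m → ℝ) (hp : ∀ i, 0 < p i ∧ p i < 1) (hpsum : ∑ i, p i = 1)
    (hq : ∀ i, 0 < q i) (α : ℝ) (hα : 0 < α ∧ α < 1)
    (Wfeas : Set (Fin m → ℝ)) (hsub : Wfeas ⊆ closedSimplex q)
    (hne : Wfeas.Nonempty) :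
    sSup (upperQuantile p n α '' Wfeas) =
      sSup {v : ℝ | ∃ Γ : Set (Fin m → ℝ), ∃ k : Fin m → ℕ,
        IsChamber m n Γ ∧ (chamberFace q Γ).Nonempty ∧ IsQuantileVec p q n α Γ k ∧
        (Wfeas ∩ closure (chamberFace q Γ)).Nonempty ∧
        v = sSup ((fun W => mono W k) '' (Wfeas ∩ closure (chamberFace q Γ)))} := by
  have hp₀ : ∀ i, 0 ≤ p i := fun i => (hp i).1.le
  have hbdd : BddAbove (upperQuantile p n α '' Wfeas) :=
    ⟨_, Set.forall_mem_image.2 fun W hW =>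
      upperQuantile_le_of_mem_closedSimplex hq hα.1 (hsub hW)⟩
  rw [csSup_image_eq_csSup_of_cover (ι := Set (Fin m → ℝ) × (Fin m → ℕ))
    (P := fun i => IsChamber m n i.1 ∧ (chamberFace q i.1).Nonempty ∧ IsQuantileVec p q n α i.1 i.2)
    (S := fun i => Wfeas ∩ closure (chamberFace q i.1)) (g := fun i W => mono W i.2)
    hbdd hne (fun _ _ => Set.inter_subset_left) ?_ ?_]
  · simp only [Prod.exists, and_assoc]
  · rintro ⟨Γ, k⟩ ⟨hΓ, -, hk⟩ W ⟨hW, hWc⟩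
    exact (upperQuantile_eq_mono_of_mem_closure hp₀ hΓ hk (hsub hW).1 hWc).symm
  · intro W hW
    obtain ⟨Γ, hΓ, hF, hWc⟩ := exists_isChamber_mem_closure_chamberFace n hq (hsub hW)
    obtain ⟨k, hk⟩ := exists_isQuantileVec hp₀ hpsum hα hΓ hF
    exact ⟨(Γ, k), ⟨hΓ, hF, hk⟩, hW, hWc⟩

/-- **Restriction to incomplete one-period wealth families.** For any nonempty closed
feasible family `Wfeas ⊆ W̄`, the supremum of the upper `α`-quantile over `Wfeas`
equals the maximum over admissible chambers `Γ` (with quantile count vector `k_{α,Γ}`,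
and nonempty intersection `Wfeas ∩ cl(F_Γ)`) of the supremum of `W^{k_{α,Γ}}` over
`Wfeas ∩ cl(F_Γ)`. -/
theorem restricted_family (m n : ℕ) (hm : 2 ≤ m) (hn : 1 ≤ n)
    (p q : Fin m → ℝ) (hp : ∀ i, 0 < p i ∧ p i < 1) (hpsum : ∑ i, p i = 1)
    (hq : ∀ i, 0 < q i) (α : ℝ) (hα : 0 < α ∧ α < 1)
    (Wfeas : Set (Fin m → ℝ)) (hsub : Wfeas ⊆ closedSimplex q)
    (hne : Wfeas.Nonempty) (hcl : IsClosed Wfeas) :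
    sSup (upperQuantile p n α '' Wfeas) =
      sSup {v : ℝ | ∃ Γ : Set (Fin m → ℝ), ∃ k : Fin m → ℕ,
        IsChamber m n Γ ∧ (chamberFace q Γ).Nonempty ∧ IsQuantileVec p q n α Γ k ∧
        (Wfeas ∩ closure (chamberFace q Γ)).Nonempty ∧
        v = sSup ((fun W => mono W k) '' (Wfeas ∩ closure (chamberFace q Γ)))} :=
  restricted_family_general m n p q hp hpsum hq α hα Wfeas hsub hne
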